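/- arXiv:2501.07174 — 2 statements merged into one kernel-verified Lean document; each statement's English description precedes it below -/
import Mathlib

section
/- Let 0 ≤ a ≤ b < 2^{n−2} and 0 < c < 2^{n−2}. Then the n-bit value t = (b − a + (2^n − c)) mod 2^n has sign bit 1 if and only if b − a < c. Combined with the previous check, the two flag conditions (sign bit of (b − a mod 2^n) is 0, and sign bit of (b − a − c mod 2^n) is 1) together hold if and only if 0 ≤ b − a < c. -/
/-! With `N = 2^(k+1)`, `d < 2^k` and `c ≤ 2^k`, the residue of `d + (N - c)` is `N - (c - d)`, in the
upper half `[2^k, N)`, when `d < c`, and `d - c`, in the lower half, otherwise; the sign bit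
`x / 2^k % 2` tells the two halves apart. -/

namespace Nat

theorem div_two_pow_mod_two_eq_zero_of_lt {x k : ℕ} (hx : x < 2 ^ k) : x / 2 ^ k % 2 = 0 := by
  rw [Nat.div_eq_of_lt hx]

theorem div_two_pow_mod_two_eq_one_of_le_of_lt {x k : ℕ} (hlo : 2 ^ k ≤ x) (hhi : x < 2 ^ (k + 1)) :
    x / 2 ^ k % 2 = 1 := by
  rw [Nat.div_eq_of_lt_le (k := 1) (by rwa [one_mul]) (by rwa [pow_succ, mul_comm] at hhi)]

theorem add_two_pow_sub_mod_div_two_pow_mod_two_eq_one_iff {k d c : ℕ}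
    (hd : d < 2 ^ k) (hc : c ≤ 2 ^ k) :
    (d + (2 ^ (k + 1) - c)) % 2 ^ (k + 1) / 2 ^ k % 2 = 1 ↔ d < c := by
  have hN : 2 ^ (k + 1) = 2 * 2 ^ k := by rw [pow_succ, mul_comm]
  rcases lt_or_ge d c with hdc | hcd
  · have hres : (d + (2 ^ (k + 1) - c)) % 2 ^ (k + 1) = 2 ^ (k + 1) - (c - d) := by
      rw [Nat.mod_eq_of_lt (by omega)]
      omega
    rw [hres, div_two_pow_mod_two_eq_one_of_le_of_lt (by omega) (by omega)]
    simp [hdc]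
  · have hres : (d + (2 ^ (k + 1) - c)) % 2 ^ (k + 1) = d - c := by
      rw [show d + (2 ^ (k + 1) - c) = d - c + 2 ^ (k + 1) by omega, Nat.add_mod_right,
        Nat.mod_eq_of_lt (by omega)]
    rw [hres, div_two_pow_mod_two_eq_zero_of_lt (by omega)]
    simp [hcd]

end Nat

theorem flag_conditions_general (n a b c : ℕ) (hn : 2 ≤ n)
    (hb : b < 2 ^ (n - 2)) (hc : c < 2 ^ (n - 2)) :
    (((((b - a) + (2 ^ n - c)) % 2 ^ n) / 2 ^ (n - 1)) % 2 = 1 ↔ b - a < c) ∧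
    (((((b - a) % 2 ^ n) / 2 ^ (n - 1)) % 2 = 0 ∧
        ((((b - a) + (2 ^ n - c)) % 2 ^ n) / 2 ^ (n - 1)) % 2 = 1) ↔ b - a < c) := by
  obtain ⟨k, rfl⟩ : ∃ k, n = k + 1 := ⟨n - 1, by omega⟩
  have hquarter : 2 ^ (k + 1 - 2) ≤ 2 ^ k := Nat.pow_le_pow_right two_pos (by omega)
  have hd : b - a < 2 ^ k := by omega
  have hsign := Nat.add_two_pow_sub_mod_div_two_pow_mod_two_eq_one_iff hd (by omega : c ≤ 2 ^ k)
  have hpos : (b - a) % 2 ^ (k + 1) / 2 ^ k % 2 = 0 := by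
    have hlt : b - a < 2 ^ (k + 1) := hd.trans (Nat.pow_lt_pow_right one_lt_two k.lt_succ_self)
    rw [Nat.mod_eq_of_lt hlt]
    exact Nat.div_two_pow_mod_two_eq_zero_of_lt hd
  simp only [Nat.add_sub_cancel] at hsign ⊢
  exact ⟨hsign, by rw [hsign, hpos]; simp⟩

/-- For `0 ≤ a ≤ b < 2^(n-2)` and `0 < c < 2^(n-2)`: the `n`-bit value
`t = (b - a + (2^n - c)) mod 2^n` has sign bit `1` iff `b - a < c`; and the two flag
conditions (sign bit of `b - a mod 2^n` is `0`, sign bit of `t` is `1`) together hold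
iff `0 ≤ b - a < c`. -/
theorem flag_conditions (n a b c : ℕ) (hn : 2 ≤ n) (hab : a ≤ b)
    (hb : b < 2 ^ (n - 2)) (hc0 : 0 < c) (hc : c < 2 ^ (n - 2)) :
    (((((b - a) + (2 ^ n - c)) % 2 ^ n) / 2 ^ (n - 1)) % 2 = 1 ↔ b - a < c) ∧
    (((((b - a) % 2 ^ n) / 2 ^ (n - 1)) % 2 = 0 ∧
        ((((b - a) + (2 ^ n - c)) % 2 ^ n) / 2 ^ (n - 1)) % 2 = 1) ↔ b - a < c) :=
  flag_conditions_general n a b c hn hb hc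
end

section
/- If a quantum search requires ⌈√(N/M)⌉ oracle iterations where N is the search-space size and M the number of solutions, then replacing the full space N_full = ∏_{k=0}^{K−1} 2^{⌈log₂((C−1)k+C)⌉ · I} by the reduced space N_red = C^{K·I} (with the same M) reduces the iteration count by the multiplicative factor √(N_full/N_red) ≥ ∏_{k=0}^{K−1} ((C−1)k+C)^{I/2} / C^{K·I/2}, which for C ≥ 2 and I ≥ 1 tends to infinity as K → ∞. -/
open Filter

/-- Replacing the full space `N_full = (∏_{k<K} 2^{⌈log₂((C-1)k+C)⌉})^I` by the reduced
space `N_red = C^{KI}` (same `M` solutions) reduces the iteration count `⌈√(N/M)⌉` by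
the factor `√(N_full/N_red)`, which is at least
`∏_{k<K}((C-1)k+C)^{I/2} / C^{KI/2}` and tends to infinity as `K → ∞`. -/
theorem search_space_reduction_factor (C I : ℕ) (hC : 2 ≤ C) (hI : 1 ≤ I) :
    (∀ K : ℕ, ∀ M : ℝ, 0 < M →
      Real.sqrt (((∏ k ∈ Finset.range K, 2 ^ Nat.clog 2 ((C - 1) * k + C) : ℕ) ^ I : ℝ) / M) /
          Real.sqrt ((C : ℝ) ^ (K * I) / M) =
        Real.sqrt (((∏ k ∈ Finset.range K, 2 ^ Nat.clog 2 ((C - 1) * k + C) : ℕ) ^ I : ℝ) /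
          (C : ℝ) ^ (K * I))) ∧
    (∀ K : ℕ,
      (∏ k ∈ Finset.range K, ((C - 1) * (k : ℝ) + C)) ^ ((I : ℝ) / 2) /
          (C : ℝ) ^ (((K * I : ℕ) : ℝ) / 2) ≤
        Real.sqrt (((∏ k ∈ Finset.range K, 2 ^ Nat.clog 2 ((C - 1) * k + C) : ℕ) ^ I : ℝ) /
          (C : ℝ) ^ (K * I))) ∧
    Tendsto (fun K : ℕ =>
        Real.sqrt (((∏ k ∈ Finset.range K, 2 ^ Nat.clog 2 ((C - 1) * k + C) : ℕ) ^ I : ℝ) /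
          (C : ℝ) ^ (K * I))) atTop atTop := by
  have hC1 : (1:ℕ) ≤ C := le_trans one_le_two hC
  have hCpos : (0:ℝ) < C := by exact_mod_cast lt_of_lt_of_le two_pos hC
  have hC2R : (2:ℝ) ≤ C := by exact_mod_cast hC
  have hQnn : ∀ K, 0 ≤ ∏ k ∈ Finset.range K, (((C:ℝ) - 1) * k + C) := by
    intro K; apply Finset.prod_nonneg; intro k _
    nlinarith [Nat.cast_nonneg (α := ℝ) k]
  have hQP : ∀ K, (∏ k ∈ Finset.range K, (((C:ℝ) - 1) * k + C)) ≤
      ((∏ k ∈ Finset.range K, 2 ^ Nat.clog 2 ((C - 1) * k + C) : ℕ) : ℝ) := by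
    intro K
    push_cast
    apply Finset.prod_le_prod
    · intro k _; nlinarith [Nat.cast_nonneg (α := ℝ) k]
    · intro k _
      have h := Nat.le_pow_clog one_lt_two ((C - 1) * k + C)
      calc ((C:ℝ) - 1) * k + C = (((C - 1) * k + C : ℕ) : ℝ) := by
            push_cast [Nat.cast_sub hC1]; ring
        _ ≤ _ := by exact_mod_cast h
  have hsqrt : ∀ K,
      Real.sqrt (((∏ k ∈ Finset.range K, 2 ^ Nat.clog 2 ((C - 1) * k + C) : ℕ) ^ I : ℝ) /
        (C : ℝ) ^ (K * I)) =
      ((∏ k ∈ Finset.range K, 2 ^ Nat.clog 2 ((C - 1) * k + C) : ℕ) : ℝ) ^ ((I:ℝ)/2) /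
        (C : ℝ) ^ (((K * I : ℕ) : ℝ)/2) := by
    intro K
    rw [Real.sqrt_eq_rpow, Real.div_rpow (by positivity) (by positivity),
      ← Real.rpow_natCast ((∏ k ∈ Finset.range K, 2 ^ Nat.clog 2 ((C - 1) * k + C) : ℕ) : ℝ) I,
      ← Real.rpow_natCast ((C:ℝ)) (K * I),
      ← Real.rpow_mul (by positivity), ← Real.rpow_mul (by positivity),
      mul_one_div, mul_one_div]
  have hpart2 : ∀ K : ℕ,
      (∏ k ∈ Finset.range K, ((C - 1) * (k : ℝ) + C)) ^ ((I : ℝ) / 2) /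
          (C : ℝ) ^ (((K * I : ℕ) : ℝ) / 2) ≤
        Real.sqrt (((∏ k ∈ Finset.range K, 2 ^ Nat.clog 2 ((C - 1) * k + C) : ℕ) ^ I : ℝ) /
          (C : ℝ) ^ (K * I)) := by
    intro K
    rw [hsqrt K]
    have h1 := hQnn K
    have h2 := hQP K
    gcongr
  refine ⟨?_, hpart2, ?_⟩
  · intro K M hM
    rw [Real.sqrt_div (by positivity) M, Real.sqrt_div (by positivity) M,
      Real.sqrt_div (by positivity)]
    have h1 : Real.sqrt M ≠ 0 := ne_of_gt (Real.sqrt_pos.mpr hM)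
    have h2 : Real.sqrt ((C:ℝ) ^ (K * I)) ≠ 0 := ne_of_gt (Real.sqrt_pos.mpr (by positivity))
    field_simp
  · -- part 3
    have hg : Tendsto (fun K : ℕ =>
        (∏ k ∈ Finset.range K, (((C:ℝ) - 1) * k + C)) / (C:ℝ) ^ K) atTop atTop := by
      have hlow : Tendsto (fun K : ℕ => ((K:ℝ) + 1) / C) atTop atTop :=
        Tendsto.atTop_div_const hCpos
          (tendsto_atTop_add_const_right atTop 1 tendsto_natCast_atTop_atTop)
      refine tendsto_atTop_mono' atTop ?_ hlow
      filter_upwards [eventually_ge_atTop 1] with K hK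
      have hmem : K - 1 ∈ Finset.range K := by
        simp [Nat.sub_lt (lt_of_lt_of_le Nat.zero_lt_one hK) Nat.one_pos]
      have hK1 : (1:ℝ) ≤ (K:ℝ) := by exact_mod_cast hK
      have hcast : ((K - 1 : ℕ) : ℝ) = (K:ℝ) - 1 := by
        rw [Nat.cast_sub hK]; norm_num
      have hsingle : ((K:ℝ) + 1) / C ≤
          ∏ k ∈ Finset.range K, ((((C:ℝ) - 1) * k + C) / C) := by
        have h := Finset.prod_le_prod (s := Finset.range K)
          (f := fun k => if k = K - 1 then ((K:ℝ) + 1) / C else 1)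
          (g := fun k => (((C:ℝ) - 1) * k + C) / C) ?_ ?_
        · rwa [Finset.prod_ite_eq' (Finset.range K) (K - 1)
            (fun _ => ((K:ℝ) + 1) / C), if_pos hmem] at h
        · intro k _
          split
          · positivity
          · norm_num
        · intro k hk
          split
          · rename_i hkk
            subst hkk
            refine (div_le_div_iff_of_pos_right hCpos).mpr ?_
            rw [hcast]
            nlinarith
          · rw [le_div_iff₀ hCpos]
            nlinarith [Nat.cast_nonneg (α := ℝ) k]
      refine le_trans hsingle (le_of_eq ?_)
      rw [Finset.prod_div_distrib, Finset.prod_const, Finset.card_range]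
    have hI2 : (0:ℝ) < (I:ℝ) / 2 := by
      have : (1:ℝ) ≤ I := by exact_mod_cast hI
      linarith
    have hcomp : Tendsto (fun K : ℕ =>
        ((∏ k ∈ Finset.range K, (((C:ℝ) - 1) * k + C)) / (C:ℝ) ^ K) ^ ((I:ℝ)/2))
        atTop atTop := (tendsto_rpow_atTop hI2).comp hg
    apply tendsto_atTop_mono _ hcomp
    intro K
    rw [hsqrt K]
    rw [Real.div_rpow (hQnn K) (by positivity)]
    have hden : ((C:ℝ) ^ K) ^ ((I:ℝ)/2) = (C:ℝ) ^ (((K * I : ℕ):ℝ)/2) := by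
      rw [← Real.rpow_natCast ((C:ℝ)) K, ← Real.rpow_mul hCpos.le]
      congr 1
      push_cast
      ring
    rw [hden]
    have h1 := hQnn K
    have h2 := hQP K
    gcongr
end
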